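/- Let A be a unital C*-algebra and let τ : A → ℂ be a faithful tracial state. Then for every element a of A, the quantity (τ((a*a)^k))^{1/(2k)} converges as k → ∞, and its limit equals the norm ‖a‖ of a. -/

import Mathlib

open Filter Topology
open scoped ComplexOrder

/-! Put `b = a⋆a`, so that `‖b‖ = ‖a‖²` and it suffices to show `τ(bᵏ)^(1/k) → ‖b‖`.
From above, `τ(bᵏ) ≤ ‖bᵏ‖ ≤ ‖b‖ᵏ` because a state has norm one on positive elements.
From below, for `0 ≤ r < ‖b‖` take `h = f(b)` with the cutoff `f t = min 1 (max 0 (t - r))`: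
`f` vanishes on `[0, r]` and is at most one, so `rᵏ h⋆h ≤ bᵏ` by functional calculus, while
`h ≠ 0` since `f ‖b‖ > 0` and `‖b‖ ∈ σ(b)`. Faithfulness gives `c = τ(h⋆h) > 0` with
`rᵏ c ≤ τ(bᵏ)`, and `c^(1/k) → 1`. -/

lemma tendsto_rpow_inv_of_geometric_bounds {x : ℕ → ℝ} {M : ℝ} (hM : 0 ≤ M)
    (hx : ∀ k, 0 ≤ x k) (hupper : ∀ k, k ≠ 0 → x k ≤ M ^ k)
    (hlower : ∀ r, 0 < r → r < M → ∃ c > 0, ∀ k, r ^ k * c ≤ x k) :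
    Tendsto (fun k => x k ^ (k : ℝ)⁻¹) atTop (𝓝 M) := by
  refine tendsto_order.2 ⟨fun l hl => ?_, fun u hu => ?_⟩
  · rcases lt_or_ge l 0 with hl0 | hl0
    · exact .of_forall fun k => hl0.trans_le (Real.rpow_nonneg (hx k) _)
    obtain ⟨r, hlr, hrM⟩ := exists_between hl
    have hr : 0 < r := hl0.trans_lt hlr
    obtain ⟨c, hc, hrc⟩ := hlower r hr hrM
    have hc_root : Tendsto (fun k : ℕ => r * c ^ (k : ℝ)⁻¹) atTop (𝓝 r) := by
      have := ((Real.continuousAt_const_rpow hc.ne').tendsto.comp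
        (tendsto_inv_atTop_zero.comp tendsto_natCast_atTop_atTop)).const_mul r
      simpa using this
    filter_upwards [hc_root.eventually (lt_mem_nhds hlr), eventually_ne_atTop 0] with k hlk hk
    calc l < r * c ^ (k : ℝ)⁻¹ := hlk
      _ = (r ^ k * c) ^ (k : ℝ)⁻¹ := by
        rw [Real.mul_rpow (by positivity) hc.le, Real.pow_rpow_inv_natCast (by positivity) hk]
      _ ≤ x k ^ (k : ℝ)⁻¹ := Real.rpow_le_rpow (by positivity) (hrc k) (by positivity)
  · filter_upwards [eventually_ne_atTop 0] with k hk
    calc x k ^ (k : ℝ)⁻¹ ≤ (M ^ k) ^ (k : ℝ)⁻¹ := by gcongr; exacts [hx k, hupper k hk]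
      _ = M := Real.pow_rpow_inv_natCast hM hk
      _ < u := hu

lemma PositiveLinearMap.re_apply_nonneg {E : Type*} [AddCommMonoid E] [PartialOrder E]
    [Module ℂ E] (φ : E →ₚ[ℂ] ℂ) {x : E} (hx : 0 ≤ x) : 0 ≤ (φ x).re :=
  (Complex.nonneg_iff.mp (φ.map_nonneg hx)).1

section CStarAlgebra

variable {A : Type*} [CStarAlgebra A] [PartialOrder A] [StarOrderedRing A]

lemma LinearMap.map_nonneg_of_map_star_mul_self_nonneg (τ : A →ₗ[ℂ] ℂ)
    (hτ : ∀ a : A, 0 ≤ τ (star a * a)) {x : A} (hx : 0 ≤ x) : 0 ≤ τ x := by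
  obtain ⟨s, rfl⟩ := CStarAlgebra.nonneg_iff_eq_star_mul_self.mp hx
  exact hτ s

namespace PositiveLinearMap

variable (φ : A →ₚ[ℂ] ℂ)

lemma re_apply_pow_le (hφ : φ 1 = 1) {b : A} (hb : 0 ≤ b) {k : ℕ} (hk : k ≠ 0) :
    (φ (b ^ k)).re ≤ ‖b‖ ^ k :=
  calc (φ (b ^ k)).re ≤ ‖φ (b ^ k)‖ := Complex.re_le_norm _
    _ ≤ ‖φ 1‖ * ‖b ^ k‖ := φ.norm_apply_le_of_nonneg _ (CStarAlgebra.pow_nonneg hb k)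
    _ ≤ ‖b‖ ^ k := by rw [hφ, norm_one, one_mul]; exact norm_pow_le' b (Nat.pos_of_ne_zero hk)

lemma re_apply_star_mul_self_pos (hφ : ∀ a, φ (star a * a) = 0 → a = 0) {a : A} (ha : a ≠ 0) :
    0 < (φ (star a * a)).re :=
  (Complex.lt_def.mp <| (φ.map_nonneg (star_mul_self_nonneg a)).lt_of_ne' (mt (hφ a) ha)).1

lemma exists_pos_pow_mul_le_re_apply_pow (hφ : ∀ a, φ (star a * a) = 0 → a = 0)
    {b : A} (hb : 0 ≤ b) {r : ℝ} (hr : 0 ≤ r) (hrb : r < ‖b‖) :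
    ∃ c > 0, ∀ k : ℕ, r ^ k * c ≤ (φ (b ^ k)).re := by
  have hb_sa : IsSelfAdjoint b := .of_nonneg hb
  set f : ℝ → ℝ := fun t => min 1 (max 0 (t - r))
  have hf : Continuous f := by fun_prop
  set h : A := cfc f b
  have h_ne : h ≠ 0 := by
    have : Nontrivial A := ⟨b, 0, norm_pos_iff.mp (hr.trans_lt hrb)⟩
    intro h0
    have hf_norm : 0 < f ‖b‖ := lt_min one_pos (lt_max_of_lt_right (sub_pos.mpr hrb))
    exact hf_norm.ne' <| eqOn_of_cfc_eq_cfc (f := f) (g := 0) (h0.trans (cfc_zero ℝ b).symm)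
      hf.continuousOn continuousOn_const hb_sa
      (CStarAlgebra.norm_mem_spectrum_of_nonneg hb)
  have hf_pow_bound : ∀ k : ℕ, ∀ t, 0 ≤ t → r ^ k * (f t * f t) ≤ t ^ k := by
    intro k t ht
    rcases le_or_gt t r with htr | htr
    · have : f t = 0 := by simp [f, htr]
      simp [this, pow_nonneg ht]
    · have hf1 : f t * f t ≤ 1 := mul_le_one₀ (min_le_left _ _) (by positivity) (min_le_left _ _)
      calc r ^ k * (f t * f t) ≤ r ^ k := mul_le_of_le_one_right (by positivity) hf1
        _ ≤ t ^ k := by gcongr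
  have h_le : ∀ k : ℕ, r ^ k • (star h * h) ≤ b ^ k := by
    intro k
    rw [(IsSelfAdjoint.cfc (f := f) (a := b)).star_eq, ← cfc_mul f f b, ← cfc_smul (r ^ k) _ b,
      ← cfc_pow_id (R := ℝ) b k]
    exact cfc_mono fun t ht => hf_pow_bound k t (spectrum_nonneg_of_nonneg hb ht)
  refine ⟨_, φ.re_apply_star_mul_self_pos hφ h_ne, fun k => ?_⟩
  have := Complex.re_le_re (OrderHomClass.mono φ (h_le k))
  rwa [φ.map_smul_of_tower, Complex.smul_re, smul_eq_mul] at this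

lemma tendsto_re_apply_pow_rpow_inv (hφ1 : φ 1 = 1) (hφ : ∀ a, φ (star a * a) = 0 → a = 0)
    {b : A} (hb : 0 ≤ b) :
    Tendsto (fun k : ℕ => (φ (b ^ k)).re ^ (k : ℝ)⁻¹) atTop (𝓝 ‖b‖) :=
  tendsto_rpow_inv_of_geometric_bounds (norm_nonneg b)
    (fun k => φ.re_apply_nonneg (CStarAlgebra.pow_nonneg hb k))
    (fun _ hk => φ.re_apply_pow_le hφ1 hb hk)
    (fun _ hr hrb => φ.exists_pos_pow_mul_le_re_apply_pow hφ hb hr.le hrb)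

end PositiveLinearMap

end CStarAlgebra

theorem norm_eq_lim_trace_pow_general
    {A : Type*} [NormedRing A] [StarRing A] [CStarRing A]
    [NormedAlgebra ℂ A] [StarModule ℂ A] [CompleteSpace A]
    (τ : A →ₗ[ℂ] ℂ)
    (hstate : τ 1 = 1)
    (hpos : ∀ a : A, 0 ≤ τ (star a * a))
    (hfaithful : ∀ a : A, τ (star a * a) = 0 → a = 0)
    (a : A) :
    Tendsto (fun k : ℕ => (τ ((star a * a) ^ k)).re ^ ((1 : ℝ) / (2 * k)))
      atTop (𝓝 ‖a‖) := by
  let : CStarAlgebra A := ⟨⟩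
  let := CStarAlgebra.spectralOrder A
  have := CStarAlgebra.spectralOrderedRing A
  let φ : A →ₚ[ℂ] ℂ := .mk₀ τ fun _ => τ.map_nonneg_of_map_star_mul_self_nonneg hpos
  have hb : 0 ≤ star a * a := star_mul_self_nonneg a
  have hroot := (φ.tendsto_re_apply_pow_rpow_inv hstate hfaithful hb).sqrt
  rw [CStarRing.norm_star_mul_self, Real.sqrt_mul_self (norm_nonneg a)] at hroot
  refine hroot.congr fun k => ?_
  rw [Real.sqrt_eq_rpow, ← Real.rpow_mul (φ.re_apply_nonneg (CStarAlgebra.pow_nonneg hb k))]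
  congr 1
  ring

/-- Let `A` be a unital C*-algebra and `τ : A → ℂ` a faithful tracial state.
Then for every `a : A`, the quantity `(τ((a* a)^k))^(1/(2k))` converges as `k → ∞` to `‖a‖`. -/
theorem norm_eq_lim_trace_pow
    {A : Type*} [NormedRing A] [StarRing A] [CStarRing A]
    [NormedAlgebra ℂ A] [StarModule ℂ A] [CompleteSpace A]
    (τ : A →ₗ[ℂ] ℂ)
    (hstate : τ 1 = 1)
    (hpos : ∀ a : A, 0 ≤ τ (star a * a))
    (htracial : ∀ a b : A, τ (a * b) = τ (b * a))
    (hfaithful : ∀ a : A, τ (star a * a) = 0 → a = 0)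
    (a : A) :
    Tendsto (fun k : ℕ => (τ ((star a * a) ^ k)).re ^ ((1 : ℝ) / (2 * k)))
      atTop (𝓝 ‖a‖) :=
  norm_eq_lim_trace_pow_general τ hstate hpos hfaithful a
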